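/- Finite coefficient extraction: let q, s ∈ ℂ with s² = q and 0 < |q| < 1, let a, c ∈ ℂ∖{0}, and n ∈ ℕ. Assume the genericity conditions: a² q^m ≠ 1 for 0 ≤ m ≤ 2n; a c q^m ≠ 1 for 0 ≤ m ≤ 2n−1; a ≠ c q^m for −n ≤ m ≤ n−1; and (c/a;q)_n ≠ 0. Suppose u₀,…,u_n ∈ ℂ and f : ℂ∖{0} → ℂ satisfies f(z) = Σ_{k=0}^n u_k Φ_k(z; a, c) for every z where all the Φ_k(z;a,c) are defined. Then for each 0 ≤ k ≤ n, u_k = t_k^{(a,c)}(f) = (−1)^k s^{−k(k−1)/2} (1 − q)^k / ((2a)^k (q, c/a, a c q^{k−1}; q)_k) · (D^{(k)}_{c,q} f)(a s^k). -/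

import Mathlib

open Complex Finset Filter Topology

/-- The finite q-shifted factorial `(a; q)_n = ∏_{j=0}^{n-1} (1 - a q^j)`. -/
noncomputable def qPoch (a q : ℂ) (n : ℕ) : ℂ := ∏ j ∈ Finset.range n, (1 - a * q ^ j)

/-- The infinite q-shifted factorial `(a; q)_∞ = ∏_{j=0}^{∞} (1 - a q^j)`. -/
noncomputable def qPochInf (a q : ℂ) : ℂ := ∏' j : ℕ, (1 - a * q ^ j)

/-- The well-poised rational monomial `Φ_k(z; a, c) = (az, a/z; q)_k / (cz, c/z; q)_k`. -/
noncomputable def wpPhi (q a c z : ℂ) (k : ℕ) : ℂ :=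
  (qPoch (a * z) q k * qPoch (a / z) q k) / (qPoch (c * z) q k * qPoch (c / z) q k)

/-- The Askey–Wilson divided-difference operator, with `s` a fixed square root of `q`:
`(D_q f)(z) = (f(sz) - f(z/s)) / ((s - s⁻¹)(z - z⁻¹)/2)`. -/
noncomputable def awD (s : ℂ) (f : ℂ → ℂ) (z : ℂ) : ℂ :=
  (f (s * z) - f (z / s)) / ((s - s⁻¹) * (z - z⁻¹) / 2)

/-- The well-poised divided-difference operator
`(D_{c,q} f)(z) = (1 - czs⁻¹)(1 - czs)(1 - cs⁻¹/z)(1 - cs/z) (D_q f)(z)`. -/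
noncomputable def wpD (s c : ℂ) (f : ℂ → ℂ) (z : ℂ) : ℂ :=
  (1 - c * z / s) * (1 - c * z * s) * (1 - c / (s * z)) * (1 - c * s / z) * awD s f z

/-- The iterated well-poised operators: `D^{(0)} = id`,
`D^{(k)} = D_{c s^{3(k-1)}, q} ∘ D^{(k-1)}`. -/
noncomputable def wpDIter (s c : ℂ) : ℕ → (ℂ → ℂ) → ℂ → ℂ
  | 0 => fun f => f
  | k + 1 => fun f => wpD s (c * s ^ (3 * k)) (wpDIter s c k f)

/-- The well-poised Taylor coefficient `t_k^{(a,c)}(f)`. -/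
noncomputable def wpT (q s a c : ℂ) (k : ℕ) (f : ℂ → ℂ) : ℂ :=
  (-1) ^ k * (s ^ (k * (k - 1) / 2))⁻¹ * (1 - q) ^ k /
    ((2 * a) ^ k *
      (qPoch q q k * qPoch (c / a) q k * qPoch (a * c * q ^ (k - 1)) q k)) *
    wpDIter s c k f (a * s ^ k)

/-! ### Auxiliary lemmas -/

lemma qPoch_succ_last (x q : ℂ) (n : ℕ) :
    qPoch x q (n+1) = qPoch x q n * (1 - x * q ^ n) := Finset.prod_range_succ _ _

lemma qPoch_succ_first (x q : ℂ) (n : ℕ) :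
    qPoch x q (n+1) = (1 - x) * qPoch (x*q) q n := by
  rw [qPoch, Finset.prod_range_succ']
  simp only [pow_zero, mul_one, qPoch]
  rw [mul_comm]
  congr 1
  exact Finset.prod_congr rfl (fun j _ => by ring)

lemma qPoch_ne_zero {x q : ℂ} {n : ℕ} (h : ∀ r, r < n → 1 - x * q ^ r ≠ 0) :
    qPoch x q n ≠ 0 :=
  Finset.prod_ne_zero_iff.mpr (fun r hr => h r (Finset.mem_range.mp hr))

lemma qPoch_factor_ne_zero {x q : ℂ} {n : ℕ} (h : qPoch x q n ≠ 0) :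
    ∀ r, r < n → 1 - x * q ^ r ≠ 0 := by
  intro r hr
  exact Finset.prod_ne_zero_iff.mp h r (Finset.mem_range.mpr hr)

lemma Qrel (q s C z : ℂ) (d : ℕ) (hq : s^2 = q)
    (h7 : 1 - C*s*q^d/z ≠ 0) :
    qPoch (C*s/z) q d = (1 - C*s/z) * qPoch (C*s^3/z) q d / (1 - C*s*q^d/z) := by
  have h := (qPoch_succ_last (C*s/z) q d).symm.trans (qPoch_succ_first (C*s/z) q d)
  have e1 : C*s/z*q = C*s^3/z := by rw [← hq]; ring
  have e2 : C*s/z*q^d = C*s*q^d/z := by ring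
  rw [e1, e2] at h
  rw [eq_div_iff h7]
  exact h

lemma Rrel (q s C z : ℂ) (d : ℕ) (hq : s^2 = q)
    (h8 : 1 - C*s*q^d*z ≠ 0) :
    qPoch (C*s*z) q d = (1 - C*s*z) * qPoch (C*s^3*z) q d / (1 - C*s*q^d*z) := by
  have h := (qPoch_succ_last (C*s*z) q d).symm.trans (qPoch_succ_first (C*s*z) q d)
  have e1 : C*s*z*q = C*s^3*z := by rw [← hq]; ring
  have e2 : C*s*z*q^d = C*s*q^d*z := by ring
  rw [e1, e2] at h
  rw [eq_div_iff h8]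
  exact h

lemma wpT_T1 (q s A C z : ℂ) (d : ℕ) (hq : s^2 = q) (hs : s ≠ 0) (hz : z ≠ 0)
    (h1 : 1 - C*s*z ≠ 0) (h2 : 1 - C/(s*z) ≠ 0) (h3 : 1 - C*s/z ≠ 0)
    (h7 : 1 - C*s*q^d/z ≠ 0)
    (hP3 : qPoch (C*s^3*z) q d ≠ 0) (hP4 : qPoch (C*s^3/z) q d ≠ 0) :
    wpPhi q A C (s*z) (d+1) =
      ((1 - A*s*z*q^d) * (1 - A/(s*z)) * (1 - C*s*q^d/z)) /
      ((1 - C*s*z) * (1 - C/(s*z)) * (1 - C*s/z)) * wpPhi q (A*s) (C*s^3) z d := by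
  have n1 : qPoch (A*(s*z)) q (d+1) = qPoch (A*s*z) q d * (1 - A*s*z*q^d) := by
    rw [show A*(s*z) = A*s*z by ring, qPoch_succ_last]
  have n2 : qPoch (A/(s*z)) q (d+1) = (1 - A/(s*z)) * qPoch (A*s/z) q d := by
    rw [qPoch_succ_first, show A/(s*z)*q = A*s/z by rw [← hq]; field_simp]
  have d1 : qPoch (C*(s*z)) q (d+1) = (1 - C*s*z) * qPoch (C*s^3*z) q d := by
    rw [qPoch_succ_first, show C*(s*z)*q = C*s^3*z by rw [← hq]; ring,
      show (1 - C*(s*z)) = 1 - C*s*z by ring]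
  have d2 : qPoch (C/(s*z)) q (d+1) = (1 - C/(s*z)) * qPoch (C*s/z) q d := by
    rw [qPoch_succ_first, show C/(s*z)*q = C*s/z by rw [← hq]; field_simp]
  rw [wpPhi, wpPhi, n1, n2, d1, d2, Qrel q s C z d hq h7]
  set P1 := qPoch (A*s*z) q d with hP1e
  set P2 := qPoch (A*s/z) q d with hP2e
  set P3 := qPoch (C*s^3*z) q d with hP3e
  set P4 := qPoch (C*s^3/z) q d with hP4e
  set a1 := 1 - A*s*z*q^d with ha1
  set a2 := 1 - A/(s*z) with ha2
  set b1 := 1 - C*s*z with hb1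
  set b2 := 1 - C/(s*z) with hb2
  set b3 := 1 - C*s/z with hb3
  set b4 := 1 - C*s*q^d/z with hb4
  field_simp

lemma wpT_T2 (q s A C z : ℂ) (d : ℕ) (hq : s^2 = q) (hs : s ≠ 0) (hz : z ≠ 0)
    (h1 : 1 - C*s*z ≠ 0) (h3 : 1 - C*s/z ≠ 0) (h4 : 1 - C*z/s ≠ 0)
    (h8 : 1 - C*s*q^d*z ≠ 0)
    (hP3 : qPoch (C*s^3*z) q d ≠ 0) (hP4 : qPoch (C*s^3/z) q d ≠ 0) :
    wpPhi q A C (z/s) (d+1) =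
      ((1 - A*s*q^d/z) * (1 - A*z/s) * (1 - C*s*q^d*z)) /
      ((1 - C*z/s) * (1 - C*s/z) * (1 - C*s*z)) * wpPhi q (A*s) (C*s^3) z d := by
  have n1 : qPoch (A*(z/s)) q (d+1) = (1 - A*z/s) * qPoch (A*s*z) q d := by
    rw [qPoch_succ_first, show A*(z/s)*q = A*s*z by rw [← hq]; field_simp,
      show (1 - A*(z/s)) = 1 - A*z/s by ring]
  have n2 : qPoch (A/(z/s)) q (d+1) = qPoch (A*s/z) q d * (1 - A*s*q^d/z) := by
    rw [show A/(z/s) = A*s/z by field_simp, qPoch_succ_last,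
      show A*s/z*q^d = A*s*q^d/z by ring]
  have d1 : qPoch (C*(z/s)) q (d+1) = (1 - C*z/s) * qPoch (C*s*z) q d := by
    rw [qPoch_succ_first, show C*(z/s)*q = C*s*z by rw [← hq]; field_simp,
      show (1 - C*(z/s)) = 1 - C*z/s by ring]
  have d2 : qPoch (C/(z/s)) q (d+1) = (1 - C*s/z) * qPoch (C*s^3/z) q d := by
    rw [show C/(z/s) = C*s/z by field_simp, qPoch_succ_first,
      show C*s/z*q = C*s^3/z by rw [← hq]; ring]
  rw [wpPhi, wpPhi, n1, n2, d1, d2, Rrel q s C z d hq h8]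
  set P1 := qPoch (A*s*z) q d with hP1e
  set P2 := qPoch (A*s/z) q d with hP2e
  set P3 := qPoch (C*s^3*z) q d with hP3e
  set P4 := qPoch (C*s^3/z) q d with hP4e
  set a1 := 1 - A*s*q^d/z with ha1
  set a2 := 1 - A*z/s with ha2
  set b1 := 1 - C*s*z with hb1
  set b3 := 1 - C*s/z with hb3
  set b4 := 1 - C*z/s with hb4
  set b5 := 1 - C*s*q^d*z with hb5
  field_simp

set_option maxHeartbeats 1000000 in
lemma scalar_key (q s C z A t : ℂ) (hq : s^2 = q) (hs : s ≠ 0) (hz : z ≠ 0)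
    (hz2 : z^2 - 1 ≠ 0) (hs2 : s^2 - 1 ≠ 0) (h1q : (1:ℂ) - q ≠ 0)
    (h1 : 1 - C*s*z ≠ 0) (h2 : 1 - C/(s*z) ≠ 0) (h3 : 1 - C*s/z ≠ 0) (h4 : 1 - C*z/s ≠ 0) :
    (1 - C * z / s) * (1 - C * z * s) * (1 - C / (s * z)) * (1 - C * s / z) *
      ((((1 - A*s*z*t) * (1 - A/(s*z)) * (1 - C*s*t/z)) /
        ((1 - C*s*z) * (1 - C/(s*z)) * (1 - C*s/z))
        - ((1 - A*s*t/z) * (1 - A*z/s) * (1 - C*s*t*z)) /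
        ((1 - C*z/s) * (1 - C*s/z) * (1 - C*s*z))) / ((s^2-1)*(z^2-1)/(2*s*z)))
      = 2*(C - A)*(1 - q*t)*(1 - A*C*t)/(1-q) := by
  have G1 : (1 - C * z / s) * (1 - C * z * s) * (1 - C / (s * z)) * (1 - C * s / z) *
      (((1 - A*s*z*t) * (1 - A/(s*z)) * (1 - C*s*t/z)) /
        ((1 - C*s*z) * (1 - C/(s*z)) * (1 - C*s/z)))
      = (1 - C*z/s) * ((1 - A*s*z*t) * (1 - A/(s*z)) * (1 - C*s*t/z)) := by
    rw [mul_div_assoc']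
    rw [div_eq_iff (by exact mul_ne_zero (mul_ne_zero h1 h2) h3)]
    ring
  have G2 : (1 - C * z / s) * (1 - C * z * s) * (1 - C / (s * z)) * (1 - C * s / z) *
      (((1 - A*s*t/z) * (1 - A*z/s) * (1 - C*s*t*z)) /
        ((1 - C*z/s) * (1 - C*s/z) * (1 - C*s*z)))
      = (1 - C/(s*z)) * ((1 - A*s*t/z) * (1 - A*z/s) * (1 - C*s*t*z)) := by
    rw [mul_div_assoc']
    rw [div_eq_iff (by exact mul_ne_zero (mul_ne_zero h4 h3) h1)]
    ring
  calc (1 - C * z / s) * (1 - C * z * s) * (1 - C / (s * z)) * (1 - C * s / z) *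
      ((((1 - A*s*z*t) * (1 - A/(s*z)) * (1 - C*s*t/z)) /
        ((1 - C*s*z) * (1 - C/(s*z)) * (1 - C*s/z))
        - ((1 - A*s*t/z) * (1 - A*z/s) * (1 - C*s*t*z)) /
        ((1 - C*z/s) * (1 - C*s/z) * (1 - C*s*z))) / ((s^2-1)*(z^2-1)/(2*s*z)))
      = ((1 - C * z / s) * (1 - C * z * s) * (1 - C / (s * z)) * (1 - C * s / z) *
          (((1 - A*s*z*t) * (1 - A/(s*z)) * (1 - C*s*t/z)) /
            ((1 - C*s*z) * (1 - C/(s*z)) * (1 - C*s/z)))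
        - (1 - C * z / s) * (1 - C * z * s) * (1 - C / (s * z)) * (1 - C * s / z) *
          (((1 - A*s*t/z) * (1 - A*z/s) * (1 - C*s*t*z)) /
            ((1 - C*z/s) * (1 - C*s/z) * (1 - C*s*z)))) / ((s^2-1)*(z^2-1)/(2*s*z)) := by
        ring
    _ = ((1 - C*z/s) * ((1 - A*s*z*t) * (1 - A/(s*z)) * (1 - C*s*t/z))
        - (1 - C/(s*z)) * ((1 - A*s*t/z) * (1 - A*z/s) * (1 - C*s*t*z))) /
          ((s^2-1)*(z^2-1)/(2*s*z)) := by rw [G1, G2]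
    _ = 2*(C - A)*(1 - q*t)*(1 - A*C*t)/(1-q) := by
        have W1 : s^2*z^2*((1 - C*z/s) * ((1 - A*s*z*t) * (1 - A/(s*z)) * (1 - C*s*t/z)))
            = (s - C*z)*(1 - A*s*z*t)*(s*z - A)*(z - C*s*t) := by
          field_simp
        have W2 : s^2*z^2*((1 - C/(s*z)) * ((1 - A*s*t/z) * (1 - A*z/s) * (1 - C*s*t*z)))
            = (s*z - C)*(z - A*s*t)*(s - A*z)*(1 - C*s*t*z) := by
          field_simp
        rw [show 2*(C - A)*(1 - q*t)*(1 - A*C*t)/(1-q)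
            = (2*(C - A)*(1 - q*t)*(1 - A*C*t))/(1-q) by ring]
        rw [div_div_eq_mul_div, div_eq_div_iff (mul_ne_zero hs2 hz2) h1q]
        apply mul_left_cancel₀ (show (s^2*z^2 : ℂ) ≠ 0 from
          mul_ne_zero (pow_ne_zero 2 hs) (pow_ne_zero 2 hz))
        rw [← hq]
        linear_combination (2*s*z*(1-s^2))*W1 - (2*s*z*(1-s^2))*W2

set_option maxHeartbeats 1000000 in
lemma wpT_key (q s A C z : ℂ) (d : ℕ) (hq : s^2 = q) (hq1 : q ≠ 1) (hs : s ≠ 0) (hz : z ≠ 0)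
    (hz2 : z^2 - 1 ≠ 0)
    (h1 : 1 - C*s*z ≠ 0) (h2 : 1 - C/(s*z) ≠ 0) (h3 : 1 - C*s/z ≠ 0) (h4 : 1 - C*z/s ≠ 0)
    (h7 : 1 - C*s*q^d/z ≠ 0) (h8 : 1 - C*s*q^d*z ≠ 0)
    (hP3 : qPoch (C*s^3*z) q d ≠ 0) (hP4 : qPoch (C*s^3/z) q d ≠ 0) :
    wpD s C (fun w => wpPhi q A C w (d+1)) z
      = 2*(C - A)*(1 - q*q^d)*(1 - A*C*q^d)/(1-q) * wpPhi q (A*s) (C*s^3) z d := by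
  have h1q : (1:ℂ) - q ≠ 0 := sub_ne_zero.mpr (fun h => hq1 h.symm)
  have hs2 : s^2 - 1 ≠ 0 := by rw [hq]; exact fun h => hq1 (by linear_combination h)
  simp only [wpD, awD]
  rw [wpT_T1 q s A C z d hq hs hz h1 h2 h3 h7 hP3 hP4,
      wpT_T2 q s A C z d hq hs hz h1 h3 h4 h8 hP3 hP4]
  rw [show (s - s⁻¹)*(z - z⁻¹)/2 = (s^2-1)*(z^2-1)/(2*s*z) by field_simp]
  have hsc := scalar_key q s C z A (q^d) hq hs hz hz2 hs2 h1q h1 h2 h3 h4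
  linear_combination (wpPhi q (A*s) (C*s^3) z d) * hsc

lemma ac_collect (a c s q : ℂ) (hsq : s^2 = q) (w r m : ℕ) (hw : w + 2*r = 2*m) :
    a*c*s^w*q^r = a*c*q^m := by
  rw [← hsq, ← pow_mul, show a*c*s^w*s^(2*r) = a*c*s^(w+2*r) by ring, hw, pow_mul]

lemma collect0 (s q x : ℂ) (hss : s ≠ 0) (hsq : s^2 = q) (u v r : ℕ) (m : ℤ)
    (hm : (u:ℤ) + 2*(r:ℤ) = (v:ℤ) + 2*m) : x*s^u*q^r = x*q^m*s^v := by
  have e2 : (s:ℂ)^(2*(r:ℤ)) = q^r := by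
    rw [← hsq]
    norm_cast
    rw [pow_mul]
  have e3 : (s:ℂ)^(2*m) = (q:ℂ)^m := by
    rw [zpow_mul, show (s:ℂ)^(2:ℤ) = q from by rw [← hsq]; norm_cast]
  have h1 : (s:ℂ)^(u:ℤ) * s^(2*(r:ℤ)) = s^(v:ℤ) * s^(2*m) := by
    rw [← zpow_add₀ hss, ← zpow_add₀ hss, hm]
  rw [e2, e3] at h1
  rw [zpow_natCast, zpow_natCast] at h1
  rw [mul_assoc, h1]
  ring

lemma sdiv_eq' (s q x y : ℂ) (hss : s ≠ 0) (hsq : s^2 = q) (u v r : ℕ) (m : ℤ)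
    (hm : (u:ℤ) + 2*(r:ℤ) = (v:ℤ) + 2*m) : x*s^u*q^r/(y*s^v) = x*(q^m)/y := by
  rw [collect0 s q x hss hsq u v r m hm]
  rw [show y*s^v = s^v*y by ring, show x*(q:ℂ)^m*s^v = s^v*(x*q^m) by ring]
  rw [mul_div_mul_left _ _ (pow_ne_zero v hss)]

/-- The eigenvalue constant picked up at step `i` acting on a monomial of residual degree `d+1`. -/
noncomputable def wpLam (q s a c : ℂ) (i d : ℕ) : ℂ :=
  2*(c*s^(3*i) - a*s^i)*(1 - q*q^d)*(1 - a*s^i*(c*s^(3*i))*q^d)/(1-q)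

/-- Accumulated constants: `wpDD i j` is the coefficient of the degree-`j` monomial after `i`
iterations of the well-poised operator. -/
noncomputable def wpDD (q s a c : ℂ) : ℕ → ℕ → ℂ
  | 0, _ => 1
  | (i+1), j => (if i < j then wpLam q s a c i (j-i-1) else 0) * wpDD q s a c i j

/-- Finite coefficient extraction. -/
theorem finite_coefficient_extraction (q s a c : ℂ) (hs : s ^ 2 = q)
    (hq0 : 0 < ‖q‖) (hq1 : ‖q‖ < 1) (ha : a ≠ 0) (hc : c ≠ 0) (n : ℕ)
    (hgen1 : ∀ m : ℕ, m ≤ 2 * n → a ^ 2 * q ^ m ≠ 1)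
    (hgen2 : ∀ m : ℕ, m < 2 * n → a * c * q ^ m ≠ 1)
    (hgen3 : ∀ m : ℤ, -(n : ℤ) ≤ m → m ≤ (n : ℤ) - 1 → a ≠ c * q ^ m)
    (hgen4 : qPoch (c / a) q n ≠ 0)
    (u : ℕ → ℂ) (f : ℂ → ℂ)
    (hf : ∀ z : ℂ, z ≠ 0 → qPoch (c * z) q n ≠ 0 → qPoch (c / z) q n ≠ 0 →
      f z = ∑ k ∈ Finset.range (n + 1), u k * wpPhi q a c z k) :
    ∀ k : ℕ, k ≤ n → u k = wpT q s a c k f := by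
  intro k hk
  have hqz : q ≠ 0 := by
    intro h; rw [h] at hq0; simp at hq0
  have hqne1 : q ≠ 1 := by
    intro h; rw [h] at hq1; simp at hq1
  have hs0 : s ≠ 0 := by
    intro h; apply hqz; rw [← hs, h]; ring
  have h1q : (1:ℂ) - q ≠ 0 := sub_ne_zero.mpr (fun h => hqne1 h.symm)
  have hACne : ∀ m : ℕ, m < 2*n → 1 - a*c*q^m ≠ 0 :=
    fun m hm => sub_ne_zero.mpr (fun h => hgen2 m hm h.symm)
  have hCAne : ∀ m : ℤ, -(n:ℤ) ≤ m → m ≤ (n:ℤ)-1 → 1 - c*(q^m : ℂ)/a ≠ 0 := by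
    intro m hm1 hm2 h
    apply hgen3 m hm1 hm2
    have h' : c * q^m / a = 1 := by linear_combination -h
    field_simp [ha] at h'
    exact h'.symm
  have hzz : ∀ e : ℕ, e ≤ 2*n → (a*s^e)^2 - 1 ≠ 0 := by
    intro e he h
    apply hgen1 e he
    have : (a*s^e)^2 = a^2*q^e := by rw [← hs, ← pow_mul, pow_mul']; ring
    rw [this] at h
    linear_combination h
  have hzne : ∀ e : ℕ, a*s^e ≠ 0 := fun e => mul_ne_zero ha (pow_ne_zero e hs0)
  -- the main induction
  have main : ∀ i, i ≤ k → ∀ e : ℕ, i ≤ e → e ≤ 2*k - i → e % 2 = i % 2 →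
      wpDIter s c i f (a * s ^ e) =
        ∑ j ∈ Finset.range (n+1), u j * wpDD q s a c i j *
          wpPhi q (a*s^i) (c*s^(3*i)) (a*s^e) (j - i) := by
    intro i
    induction i with
    | zero =>
      intro _ e _ he2 hpar
      obtain ⟨m, hm⟩ : ∃ m, e = 2*m := ⟨e/2, by omega⟩
      have hm2 : m ≤ k := by omega
      show f (a*s^e) = _
      rw [hf (a*s^e) (hzne e) ?_ ?_]
      · apply Finset.sum_congr rfl; intro j hj
        simp [wpDD, wpDIter]
      · apply qPoch_ne_zero; intro r hr
        rw [show c*(a*s^e)*q^r = a*c*s^(e+2*0)*q^r by ring,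
          ac_collect a c s q hs (e+2*0) r (m+r) (by omega)]
        exact hACne (m+r) (by omega)
      · apply qPoch_ne_zero; intro r hr
        rw [show c/(a*s^e)*q^r = c*s^0*q^r/(a*s^e) by ring,
          sdiv_eq' s q c a hs0 hs 0 e r ((r:ℤ) - m) (by omega)]
        exact hCAne ((r:ℤ) - m) (by omega) (by omega)
    | succ i IH =>
      intro hik e he1 he2 hpar
      have hik' : i ≤ k := by omega
      obtain ⟨e', rfl⟩ : ∃ e', e = e'+1 := ⟨e-1, by omega⟩
      have hie : i ≤ e' := by omega
      have hee : e' + 1 ≤ 2*k - (i+1) := he2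
      have hkn : k ≤ n := hk
      show wpD s (c*s^(3*i)) (wpDIter s c i f) (a*s^(e'+1)) = _
      simp only [wpD, awD]
      rw [show s*(a*s^(e'+1)) = a*s^(e'+2) by ring]
      rw [show (a*s^(e'+1))/s = a*s^e' by
        rw [show a*s^(e'+1) = a*s^e'*s by ring, mul_div_cancel_right₀ _ hs0]]
      rw [IH hik' (e'+2) (by omega) (by omega) (by omega),
          IH hik' e' (by omega) (by omega) (by omega)]
      rw [← Finset.sum_sub_distrib, Finset.sum_div, Finset.mul_sum]
      apply Finset.sum_congr rfl
      intro j hj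
      have hjn : j < n+1 := Finset.mem_range.mp hj
      by_cases hij : i < j
      · -- surviving terms: use the key one-step lemma
        have hd : j - i - 1 + 1 = j - i := by omega
        have h1 : 1 - (c*s^(3*i))*s*(a*s^(e'+1)) ≠ 0 := by
          rw [show c*s^(3*i)*s*(a*s^(e'+1)) = a*c*s^(3*i+e'+2)*q^0 by ring,
            ac_collect a c s q hs (3*i+e'+2) 0 ((3*i+e'+2)/2) (by omega)]
          exact hACne _ (by omega)
        have h2 : 1 - (c*s^(3*i))/(s*(a*s^(e'+1))) ≠ 0 := by
          rw [show c*s^(3*i)/(s*(a*s^(e'+1))) = c*s^(3*i)*q^0/(a*s^(e'+2)) by ring,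
            sdiv_eq' s q c a hs0 hs (3*i) (e'+2) 0 ((3*(i:ℤ)-e'-2)/2) (by omega)]
          exact hCAne _ (by omega) (by omega)
        have h3 : 1 - (c*s^(3*i))*s/(a*s^(e'+1)) ≠ 0 := by
          rw [show c*s^(3*i)*s/(a*s^(e'+1)) = c*s^(3*i+1)*q^0/(a*s^(e'+1)) by ring,
            sdiv_eq' s q c a hs0 hs (3*i+1) (e'+1) 0 ((3*(i:ℤ)-e')/2) (by omega)]
          exact hCAne _ (by omega) (by omega)
        have h4 : 1 - (c*s^(3*i))*(a*s^(e'+1))/s ≠ 0 := by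
          rw [show c*s^(3*i)*(a*s^(e'+1)) = a*c*s^(3*i+e')*q^0*s by ring,
            mul_div_cancel_right₀ _ hs0,
            ac_collect a c s q hs (3*i+e') 0 ((3*i+e')/2) (by omega)]
          exact hACne _ (by omega)
        have h7 : 1 - (c*s^(3*i))*s*q^(j-i-1)/(a*s^(e'+1)) ≠ 0 := by
          rw [show c*s^(3*i)*s*q^(j-i-1) = c*s^(3*i+1)*q^(j-i-1) by ring,
            sdiv_eq' s q c a hs0 hs (3*i+1) (e'+1) (j-i-1)
              ((3*(i:ℤ)+1+2*((j:ℤ)-i-1)-(e'+1))/2) (by omega)]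
          exact hCAne _ (by omega) (by omega)
        have h8 : 1 - (c*s^(3*i))*s*q^(j-i-1)*(a*s^(e'+1)) ≠ 0 := by
          rw [show c*s^(3*i)*s*q^(j-i-1)*(a*s^(e'+1))
              = a*c*s^(3*i+e'+2)*q^(j-i-1) by ring,
            ac_collect a c s q hs (3*i+e'+2) (j-i-1) ((3*i+e'+2)/2 + (j-i-1)) (by omega)]
          exact hACne _ (by omega)
        have hP3 : qPoch ((c*s^(3*i))*s^3*(a*s^(e'+1))) q (j-i-1) ≠ 0 := by
          apply qPoch_ne_zero; intro r hr
          rw [show c*s^(3*i)*s^3*(a*s^(e'+1))*q^r = a*c*s^(3*i+e'+4)*q^r by ring,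
            ac_collect a c s q hs (3*i+e'+4) r ((3*i+e'+4)/2 + r) (by omega)]
          exact hACne _ (by omega)
        have hP4 : qPoch ((c*s^(3*i))*s^3/(a*s^(e'+1))) q (j-i-1) ≠ 0 := by
          apply qPoch_ne_zero; intro r hr
          rw [show c*s^(3*i)*s^3/(a*s^(e'+1))*q^r = c*s^(3*i+3)*q^r/(a*s^(e'+1)) by ring,
            sdiv_eq' s q c a hs0 hs (3*i+3) (e'+1) r
              ((3*(i:ℤ)+3+2*(r:ℤ)-(e'+1))/2) (by omega)]
          exact hCAne _ (by omega) (by omega)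
        have K := wpT_key q s (a*s^i) (c*s^(3*i)) (a*s^(e'+1)) (j-i-1) hs hqne1 hs0
          (hzne (e'+1)) (hzz (e'+1) (by omega)) h1 h2 h3 h4 h7 h8 hP3 hP4
        simp only [wpD, awD] at K
        rw [show s*(a*s^(e'+1)) = a*s^(e'+2) by ring] at K
        rw [show (a*s^(e'+1))/s = a*s^e' by
          rw [show a*s^(e'+1) = a*s^e'*s by ring, mul_div_cancel_right₀ _ hs0]] at K
        rw [hd] at K
        rw [show wpDD q s a c (i+1) j = wpLam q s a c i (j-i-1) * wpDD q s a c i j by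
          simp [wpDD, if_pos hij]]
        rw [show a*s^(i+1) = a*s^i*s by ring,
          show c*s^(3*(i+1)) = c*s^(3*i)*s^3 by ring,
          show j-(i+1) = j-i-1 by omega, wpLam]
        linear_combination (u j * wpDD q s a c i j) * K
      · -- dead terms
        have h0 : j - i = 0 := by omega
        have h0' : j - (i+1) = 0 := by omega
        rw [h0, h0', show wpDD q s a c (i+1) j = 0 by simp [wpDD, hij]]
        simp [wpPhi, qPoch]
  -- evaluate at the top
  have hend := main k le_rfl k le_rfl (by omega) rfl
  have hDD0 : ∀ j, j < k → wpDD q s a c k j = 0 := by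
    intro j hjk
    obtain ⟨i, rfl⟩ : ∃ i, k = i + 1 := ⟨k-1, by omega⟩
    show (if i < j then wpLam q s a c i (j-i-1) else 0) * wpDD q s a c i j = 0
    rw [if_neg (by omega), zero_mul]
  have hsum : wpDIter s c k f (a*s^k) = u k * wpDD q s a c k k := by
    rw [hend, Finset.sum_eq_single k]
    · rw [show k - k = 0 by omega]
      simp [wpPhi, qPoch]
    · intro j hj hjk
      rcases lt_or_gt_of_ne hjk with h|h
      · rw [hDD0 j h]; ring
      · have hone : (a*s^k)/(a*s^k) = 1 := div_self (hzne k)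
        obtain ⟨d', hd'⟩ : ∃ d', j - k = d' + 1 := ⟨j-k-1, by omega⟩
        have hz0 : qPoch ((a*s^k)/(a*s^k)) q (j-k) = 0 := by
          rw [hone, hd', qPoch_succ_first]; simp
        rw [wpPhi, hz0]
        simp
    · intro hknotin
      exact absurd (Finset.mem_range.mpr (by omega)) hknotin
  -- closed form for the accumulated constant
  have hDDprod : ∀ i, i ≤ k → wpDD q s a c i k = ∏ m ∈ Finset.range i, wpLam q s a c m (k-m-1) := by
    intro i
    induction i with
    | zero => intro _; simp [wpDD]
    | succ i IH =>
      intro hik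
      show (if i < k then wpLam q s a c i (k-i-1) else 0) * wpDD q s a c i k = _
      rw [if_pos (by omega), IH (by omega), Finset.prod_range_succ]
      ring
  have hPq : qPoch q q k ≠ 0 := by
    apply qPoch_ne_zero; intro r hr
    rw [show q*q^r = q^(r+1) by rw [pow_succ]; ring]
    intro h
    have h1 : q^(r+1) = 1 := by linear_combination -h
    have : ‖q^(r+1)‖ < 1 := by
      rw [norm_pow]
      exact pow_lt_one₀ (norm_nonneg q) hq1 (Nat.succ_ne_zero r)
    rw [h1] at this
    simp at this
  have hPca : qPoch (c/a) q k ≠ 0 := by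
    apply qPoch_ne_zero; intro r hr
    exact qPoch_factor_ne_zero hgen4 r (by omega)
  have hPac : qPoch (a*c*q^(k-1)) q k ≠ 0 := by
    apply qPoch_ne_zero; intro r hr
    rw [show a*c*q^(k-1)*q^r = a*c*q^(k-1+r) by rw [mul_assoc, ← pow_add]]
    exact hACne (k-1+r) (by omega)
  -- compute the product of eigenvalues
  have hprod : ∏ m ∈ Finset.range k, wpLam q s a c m (k-m-1)
      = (-(2*a))^k * s^(k*(k-1)/2) *
        (qPoch (c/a) q k * qPoch q q k * qPoch (a*c*q^(k-1)) q k) * ((1-q)^k)⁻¹ := by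
    have hfac : ∀ m, m < k → wpLam q s a c m (k-m-1)
        = (-(2*a)) * s^m * ((1 - (c/a)*q^m) * ((1 - q*q^(k-1-m)) *
            ((1 - (a*c*q^(k-1))*q^m) * (1-q)⁻¹))) := by
      intro m hm
      rw [wpLam, show k-m-1 = k-1-m by omega]
      have h3m : (s:ℂ)^(3*m) = s^m * q^m := by
        rw [← hs, ← pow_mul, ← pow_add]; congr 1; omega
      have hqq : (q:ℂ)^m * q^(k-1-m) = q^(k-1) := by
        rw [← pow_add]; congr 1; omega
      rw [h3m]
      have haq : (c*(s^m*q^m) - a*s^m) = -(a*s^m)*(1 - (c/a)*q^m) := by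
        field_simp
        ring
      rw [haq]
      have hthird : 1 - a*s^m*(c*(s^m*q^m))*q^(k-1-m) = 1 - (a*c*q^(k-1))*q^m := by
        have hs2m : (s:ℂ)^m*s^m = q^m := by rw [← hs, ← pow_add, ← pow_mul]; congr 1; omega
        calc 1 - a*s^m*(c*(s^m*q^m))*q^(k-1-m)
            = 1 - a*c*(s^m*s^m)*(q^m*q^(k-1-m)) := by ring
          _ = 1 - (a*c*q^(k-1))*q^m := by rw [hs2m, hqq]; ring
      rw [hthird]
      field_simp
    rw [Finset.prod_congr rfl (fun m hm => hfac m (Finset.mem_range.mp hm))]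
    rw [Finset.prod_mul_distrib, Finset.prod_mul_distrib, Finset.prod_mul_distrib,
      Finset.prod_mul_distrib, Finset.prod_mul_distrib]
    rw [Finset.prod_const, Finset.card_range]
    rw [Finset.prod_pow_eq_pow_sum]
    rw [Finset.sum_range_id]
    rw [Finset.prod_const, Finset.card_range, ← inv_pow]
    have e1 : ∏ m ∈ Finset.range k, (1 - (c/a)*q^m) = qPoch (c/a) q k := rfl
    have e2 : ∏ m ∈ Finset.range k, (1 - (a*c*q^(k-1))*q^m) = qPoch (a*c*q^(k-1)) q k := rfl
    have e3 : ∏ m ∈ Finset.range k, (1 - q*q^(k-1-m)) = qPoch q q k := by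
      rw [show qPoch q q k = ∏ j ∈ Finset.range k, (1 - q*q^j) from rfl]
      exact Finset.prod_range_reflect (fun j => 1 - q*q^j) k
    rw [e1, e2, e3]
    ring
  -- final assembly
  have hprodne : qPoch q q k * qPoch (c/a) q k * qPoch (a*c*q^(k-1)) q k ≠ 0 :=
    mul_ne_zero (mul_ne_zero hPq hPca) hPac
  have hm1 : ((-2:ℂ))^k * ((-1:ℂ))^k = 2^k := by
    rw [← mul_pow]; norm_num
  rw [wpT, hsum, hDDprod k le_rfl, hprod]
  have hTne : (s:ℂ)^(k*(k-1)/2) ≠ 0 := pow_ne_zero _ hs0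
  have h2a : ((2:ℂ)*a)^k ≠ 0 := pow_ne_zero _ (mul_ne_zero two_ne_zero ha)
  have h1qk : ((1:ℂ)-q)^k ≠ 0 := pow_ne_zero _ h1q
  rw [neg_pow]
  field_simp
  linear_combination (-(u k * a^k)) * hm1
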